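/- arXiv:2602.11843 — 4 statements merged into one kernel-verified Lean document; each statement's English description precedes it below -/
import Mathlib

section
/- For any element B of a commutative ℚ-algebra, setting U = B^2, V = U·(B + 2U), P = (3/20)·B + 2U + V, Q = (11/40)·B − (1/8)·U + (1/4)·V, and W = P·Q, one has W + 1 + B + (767/800)·U + (15/32)·V = Σ_{j=0}^{8} B^j; i.e., the radix-9 kernel computes T_9(B) in three multiplications. -/
/-- Radix-9 kernel in three multiplications, in any commutative ℚ-algebra. -/
theorem radix9_kernel {R : Type*} [CommRing R] [Algebra ℚ R] (B U V P Q W : R)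
    (hU : U = B ^ 2)
    (hV : V = U * (B + 2 * U))
    (hP : P = (3 / 20 : ℚ) • B + 2 * U + V)
    (hQ : Q = (11 / 40 : ℚ) • B - (1 / 8 : ℚ) • U + (1 / 4 : ℚ) • V)
    (hW : W = P * Q) :
    W + 1 + B + (767 / 800 : ℚ) • U + (15 / 32 : ℚ) • V =
      ∑ j ∈ Finset.range 9, B ^ j := by
  subst hW hP hQ hV hU
  simp only [Finset.sum_range_succ, Finset.sum_range_zero]
  algebra
end

section
/- If f is an approximate radix-m kernel (m ≥ 1) with error map E(z) = 1 − (1−z)f(z), then the polynomial (1−z)·f(z)·f(E(z)) − 1 is divisible by z^{m^2}; equivalently, f(z)·f(E(z)) agrees with the power series (1−z)^{−1} through degree m^2 − 1. -/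
open Polynomial

namespace Polynomial

variable {R : Type*} [CommRing R]

theorem X_pow_mul_dvd_comp {a b : ℕ} {p q : R[X]} (hp : X ^ a ∣ p) (hq : X ^ b ∣ q) :
    X ^ (a * b) ∣ p.comp q := by
  obtain ⟨r, rfl⟩ := hp
  rw [mul_comp, pow_comp, X_comp, mul_comm a, pow_mul]
  exact (pow_dvd_pow_of_dvd hq a).mul_right _

/-- With `E := 1 - (1 - X) * f`, we have `1 - E = (1 - X) * f`, hence
`E ∘ E = 1 - (1 - E) * (f ∘ E) = 1 - (1 - X) * f * (f ∘ E)`. -/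
theorem comp_self_one_sub_one_sub_X_mul (f : R[X]) :
    (1 - (1 - X) * f).comp (1 - (1 - X) * f) = 1 - (1 - X) * f * f.comp (1 - (1 - X) * f) := by
  rw [sub_comp, one_comp, mul_comp, sub_comp, one_comp, X_comp]
  ring

end Polynomial

theorem prefix_growth_general {R : Type*} [CommRing R] (m : ℕ)
    (f : R[X]) (hf : X ^ m ∣ (1 - X) * f - 1)
    (E : R[X]) (hE : E = 1 - (1 - X) * f) :
    X ^ (m ^ 2) ∣ (1 - X) * f * (f.comp E) - 1 := by
  have hXE : X ^ m ∣ E := by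
    rw [hE, ← neg_sub]
    exact hf.neg_right
  have hEE : X ^ (m ^ 2) ∣ E.comp E := sq m ▸ X_pow_mul_dvd_comp hXE hXE
  rw [← neg_sub, dvd_neg]
  subst hE
  rwa [← comp_self_one_sub_one_sub_X_mul]

/-- Prefix growth: if `f` is an approximate radix-m kernel with error map
`E = 1 − (1−z)f(z)`, then `(1−z)·f(z)·f(E(z)) − 1` is divisible by `z^{m²}`,
so `f(z)·f(E(z))` agrees with `(1−z)⁻¹` through degree `m² − 1`. -/
theorem prefix_growth {R : Type*} [CommRing R] (m : ℕ) (hm : 1 ≤ m)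
    (f : R[X]) (hf : X ^ m ∣ (1 - X) * f - 1)
    (E : R[X]) (hE : E = 1 - (1 - X) * f) :
    X ^ (m ^ 2) ∣ (1 - X) * f * (f.comp E) - 1 :=
  prefix_growth_general m f hf E hE
end

section
/- Let M = I − A for a square matrix A, let f be an approximate radix-m kernel with error map E, and define Y_0 = I, R_0 = A, Y_{n+1} = Y_n · f(R_n), R_{n+1} = I − M·Y_{n+1}. Then for all n, R_n = E^{[n]}(A), where E^{[n]} is the n-fold composition of E evaluated at the matrix A. -/
/-! The relation `R_{n+1} = I − M Y_{n+1}` says `M Y_n = I − R_n` for every `n`, so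
`R_{n+1} = I − M Y_n f(R_n) = I − (I − R_n) f(R_n) = E(R_n)`, and `R_n = E^{[n]}(A)` follows
by induction. -/

open Polynomial

theorem Polynomial.aeval_one_sub_one_sub_X_mul {R S : Type*} [CommRing R] [Ring S] [Algebra R S]
    (f : R[X]) (x : S) : aeval x (1 - (1 - X) * f) = 1 - (1 - x) * aeval x f := by
  simp

theorem Polynomial.aeval_iterate_comp_X {R S : Type*} [CommSemiring R] [Semiring S] [Algebra R S]
    (p : R[X]) (x : S) (n : ℕ) : aeval x ((p.comp ·)^[n] X) = (aeval · p)^[n] x := by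
  induction n with
  | zero => simp
  | succ n ih => rw [Function.iterate_succ_apply', Function.iterate_succ_apply', aeval_comp, ih]

section RadixKernelIteration

variable {K S : Type*} [CommRing K] [Ring S] [Algebra K S] {a : S} {f : K[X]} {Y R : ℕ → S}

theorem one_sub_mul_approx_eq_one_sub_residual (hY0 : Y 0 = 1) (hR0 : R 0 = a)
    (hRs : ∀ n, R (n + 1) = 1 - (1 - a) * Y (n + 1)) : ∀ n, (1 - a) * Y n = 1 - R n
  | 0 => by rw [hY0, hR0, mul_one]
  | n + 1 => by rw [hRs n, sub_sub_cancel]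

theorem residual_succ_eq_aeval_error (hY0 : Y 0 = 1) (hR0 : R 0 = a)
    (hYs : ∀ n, Y (n + 1) = Y n * aeval (R n) f)
    (hRs : ∀ n, R (n + 1) = 1 - (1 - a) * Y (n + 1)) (n : ℕ) :
    R (n + 1) = aeval (R n) (1 - (1 - X) * f) := by
  rw [aeval_one_sub_one_sub_X_mul, hRs n, hYs n, ← mul_assoc,
    one_sub_mul_approx_eq_one_sub_residual hY0 hR0 hRs n]

theorem residual_eq_iterate_aeval_error (hY0 : Y 0 = 1) (hR0 : R 0 = a)
    (hYs : ∀ n, Y (n + 1) = Y n * aeval (R n) f)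
    (hRs : ∀ n, R (n + 1) = 1 - (1 - a) * Y (n + 1)) (n : ℕ) :
    R n = (aeval · (1 - (1 - X) * f))^[n] a := by
  induction n with
  | zero => exact hR0
  | succ n ih =>
    rw [Function.iterate_succ_apply', ← ih, residual_succ_eq_aeval_error hY0 hR0 hYs hRs]

end RadixKernelIteration

theorem radix_kernel_iteration_general {d : ℕ} {K : Type*} [CommRing K]
    (A : Matrix (Fin d) (Fin d) K)
    (f : K[X])
    (E : K[X]) (hE : E = 1 - (1 - X) * f)
    (M : Matrix (Fin d) (Fin d) K) (hM : M = 1 - A)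
    (Y Rs : ℕ → Matrix (Fin d) (Fin d) K)
    (hY0 : Y 0 = 1) (hR0 : Rs 0 = A)
    (hYs : ∀ n, Y (n + 1) = Y n * Polynomial.aeval (Rs n) f)
    (hRs : ∀ n, Rs (n + 1) = 1 - M * Y (n + 1)) :
    ∀ n, Rs n = Polynomial.aeval A ((fun q : K[X] => E.comp q)^[n] X) := by
  subst hE hM
  intro n
  rw [aeval_iterate_comp_X]
  exact residual_eq_iterate_aeval_error hY0 hR0 hYs hRs n

/-- General radix-kernel matrix iteration: with `M = I − A`, `Y₀ = I`, `R₀ = A`,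
`Y_{n+1} = Yₙ · f(Rₙ)`, `R_{n+1} = I − M·Y_{n+1}`, where `f` is an approximate
radix-m kernel with error map `E = 1 − (1−z)f(z)`, one has `Rₙ = E^{[n]}(A)`. -/
theorem radix_kernel_iteration {d : ℕ} {K : Type*} [CommRing K]
    (A : Matrix (Fin d) (Fin d) K) (m : ℕ) (hm : 1 ≤ m)
    (f : K[X]) (hf : X ^ m ∣ (1 - X) * f - 1)
    (E : K[X]) (hE : E = 1 - (1 - X) * f)
    (M : Matrix (Fin d) (Fin d) K) (hM : M = 1 - A)
    (Y Rs : ℕ → Matrix (Fin d) (Fin d) K)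
    (hY0 : Y 0 = 1) (hR0 : Rs 0 = A)
    (hYs : ∀ n, Y (n + 1) = Y n * Polynomial.aeval (Rs n) f)
    (hRs : ∀ n, Rs (n + 1) = 1 - M * Y (n + 1)) :
    ∀ n, Rs n = Polynomial.aeval A ((fun q : K[X] => E.comp q)^[n] X) :=
  radix_kernel_iteration_general A f E hE M hM Y Rs hY0 hR0 hYs hRs
end

section
/- With the iteration Y_{n+1} = Y_n·f(R_n), R_{n+1} = I − (I−A)·Y_{n+1}, starting from Y_0 = I, R_0 = A, with f an approximate radix-m kernel (m ≥ 2): the residual R_n, viewed as a polynomial in A, is divisible by A^{m^n}; i.e., there exists a polynomial g with R_n = A^{m^n}·g(A). -/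
open Polynomial

/-
With `E := 1 - (1 - X) f`, the identity `(1 - A) Yₙ = 1 - Rₙ` turns the update into
`Rₙ₊₁ = E(Rₙ)`, so `Rₙ = E^{∘n}(A)`. Since `X^m ∣ E`, composing with `E` multiplies the
`X`-adic order by at least `m`, hence `X^{m^n}` divides the `n`-fold composite `E^{∘n}`.
-/

theorem Polynomial.X_pow_mul_dvd_comp_s12 {R : Type*} [CommSemiring R] {p q : R[X]} {a b : ℕ}
    (hp : X ^ a ∣ p) (hq : X ^ b ∣ q) : X ^ (a * b) ∣ p.comp q := by
  obtain ⟨r, rfl⟩ := hp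
  rw [mul_comp, pow_comp, X_comp, mul_comm, pow_mul]
  exact dvd_mul_of_dvd_left (pow_dvd_pow_of_dvd hq a) _

theorem Polynomial.X_pow_pow_dvd_iterate_comp {R : Type*} [CommSemiring R] {p : R[X]} {m : ℕ}
    (hp : X ^ m ∣ p) (n : ℕ) : X ^ (m ^ n) ∣ p.comp^[n] X := by
  induction n with
  | zero => simp
  | succ n ih =>
    rw [Function.iterate_succ_apply', pow_succ']
    exact X_pow_mul_dvd_comp_s12 hp ih

theorem Polynomial.eq_aeval_iterate_comp_of_succ_eq_aeval {R S : Type*} [CommSemiring R]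
    [Semiring S] [Algebra R S] {p : R[X]} {r : ℕ → S} (hr : ∀ n, r (n + 1) = aeval (r n) p)
    (n : ℕ) : r n = aeval (r 0) (p.comp^[n] X) := by
  induction n with
  | zero => simp
  | succ n ih => rw [hr, ih, Function.iterate_succ_apply', aeval_comp]

theorem one_sub_mul_mul_aeval_eq_aeval {K S : Type*} [CommRing K] [Ring S] [Algebra K S]
    (f : K[X]) {A Y R : S} (hR : R = 1 - (1 - A) * Y) :
    1 - (1 - A) * (Y * aeval R f) = aeval R (1 - (1 - X) * f) := by
  have hAY : (1 - A) * Y = 1 - R := by rw [hR, sub_sub_cancel]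
  rw [← mul_assoc, hAY]
  simp only [map_sub, map_mul, map_one, aeval_X]

theorem residual_divisibility_general {d : ℕ} {K : Type*} [CommRing K]
    (A : Matrix (Fin d) (Fin d) K) (m : ℕ)
    (f : K[X]) (hf : X ^ m ∣ (1 - X) * f - 1)
    (Y Rs : ℕ → Matrix (Fin d) (Fin d) K)
    (hY0 : Y 0 = 1) (hR0 : Rs 0 = A)
    (hYs : ∀ n, Y (n + 1) = Y n * Polynomial.aeval (Rs n) f)
    (hRs : ∀ n, Rs (n + 1) = 1 - (1 - A) * Y (n + 1)) :
    ∀ n, ∃ g : K[X], Rs n = A ^ (m ^ n) * Polynomial.aeval A g := by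
  set E : K[X] := 1 - (1 - X) * f
  have hE : X ^ m ∣ E := by simpa only [neg_sub] using hf.neg_right
  have hRY : ∀ n, Rs n = 1 - (1 - A) * Y n
    | 0 => by rw [hR0, hY0, mul_one, sub_sub_cancel]
    | n + 1 => hRs n
  have hRE : ∀ n, Rs (n + 1) = aeval (Rs n) E := fun n => by
    rw [hRs, hYs, one_sub_mul_mul_aeval_eq_aeval f (hRY n)]
  intro n
  obtain ⟨g, hg⟩ := X_pow_pow_dvd_iterate_comp hE n
  refine ⟨g, ?_⟩
  rw [eq_aeval_iterate_comp_of_succ_eq_aeval hRE n, hR0, hg, map_mul, aeval_X_pow]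

/-- Residual divisibility: under the general radix-kernel iteration with an
approximate radix-m kernel (`m ≥ 2`), the residual `Rₙ` is `A^{m^n}` times a
polynomial in `A`. -/
theorem residual_divisibility {d : ℕ} {K : Type*} [CommRing K]
    (A : Matrix (Fin d) (Fin d) K) (m : ℕ) (hm : 2 ≤ m)
    (f : K[X]) (hf : X ^ m ∣ (1 - X) * f - 1)
    (Y Rs : ℕ → Matrix (Fin d) (Fin d) K)
    (hY0 : Y 0 = 1) (hR0 : Rs 0 = A)
    (hYs : ∀ n, Y (n + 1) = Y n * Polynomial.aeval (Rs n) f)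
    (hRs : ∀ n, Rs (n + 1) = 1 - (1 - A) * Y (n + 1)) :
    ∀ n, ∃ g : K[X], Rs n = A ^ (m ^ n) * Polynomial.aeval A g :=
  residual_divisibility_general A m f hf Y Rs hY0 hR0 hYs hRs
end
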